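/- Frank's 2D self-similar solution: the radially symmetric function T(r,t) = T_∞ (1 - F(r/√t)/F(S)) for r > S√t, where F(s) = E₁(s²/4), satisfies the two-dimensional heat equation ∂T/∂t = (1/r)∂/∂r(r ∂T/∂r) in the region r > S√t, with T = 0 on the moving circle r = S√t and T → T_∞ as r → ∞. -/

import Mathlib

open MeasureTheory Real Filter Set

noncomputable def E1 (x : ℝ) : ℝ := ∫ t in Set.Ioi x, Real.exp (-t) / t

noncomputable def FrankF (s : ℝ) : ℝ := E1 (s ^ 2 / 4)

lemma E1_integrableOn {a : ℝ} (ha : 0 < a) :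
    IntegrableOn (fun t => Real.exp (-t) / t) (Set.Ioi a) := by
  have h : IntegrableOn (fun t : ℝ => Real.exp (-t) / a) (Set.Ioi a) := by
    have := exp_neg_integrableOn_Ioi a (one_pos)
    simp only [neg_one_mul] at this
    exact this.div_const _
  refine h.mono' ?_ ?_
  · refine (ContinuousOn.aestronglyMeasurable ?_ measurableSet_Ioi)
    exact ContinuousOn.div (Real.continuous_exp.comp continuous_neg).continuousOn
      continuousOn_id (fun t ht => (ha.trans ht).ne')
  · filter_upwards [ae_restrict_mem measurableSet_Ioi] with t ht
    have ht0 : 0 < t := ha.trans ht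
    rw [Real.norm_eq_abs, abs_of_nonneg (by positivity)]
    exact div_le_div_of_nonneg_left (Real.exp_pos _).le ha ht.le

lemma E1_pos {x : ℝ} (hx : 0 < x) : 0 < E1 x := by
  have hae : 0 ≤ᵐ[volume.restrict (Set.Ioi x)] fun t => Real.exp (-t) / t := by
    filter_upwards [ae_restrict_mem measurableSet_Ioi] with t ht
    have ht0 : 0 < t := hx.trans ht
    positivity
  rw [E1, setIntegral_pos_iff_support_of_nonneg_ae hae (E1_integrableOn hx)]
  have hsub : Set.Ioi x ⊆ Function.support (fun t => Real.exp (-t) / t) ∩ Set.Ioi x := by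
    intro t ht
    have ht0 : 0 < t := hx.trans ht
    have : 0 < Real.exp (-t) / t := by positivity
    exact ⟨this.ne', ht⟩
  calc (0 : ENNReal) < volume (Set.Ioi x) := by simp
    _ ≤ _ := measure_mono hsub

lemma E1_hasDerivAt {x : ℝ} (hx : 0 < x) : HasDerivAt E1 (-(Real.exp (-x) / x)) x := by
  set a := x / 2 with ha
  have ha0 : 0 < a := by positivity
  have hax : a < x := by rw [ha]; linarith
  have hint : IntegrableOn (fun t => Real.exp (-t) / t) (Set.Ioi a) := E1_integrableOn ha0
  have key : ∀ y, a < y → E1 y = (∫ t in Set.Ioi a, Real.exp (-t) / t)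
      - ∫ t in a..y, Real.exp (-t) / t := by
    intro y hy
    have hsplit : (∫ t in Set.Ioi a, Real.exp (-t) / t)
        = (∫ t in Set.Ioc a y, Real.exp (-t) / t) + ∫ t in Set.Ioi y, Real.exp (-t) / t := by
      rw [← setIntegral_union (Set.Ioc_disjoint_Ioi le_rfl) measurableSet_Ioi
        (hint.mono_set Set.Ioc_subset_Ioi_self) (hint.mono_set (Set.Ioi_subset_Ioi hy.le)),
        Set.Ioc_union_Ioi_eq_Ioi hy.le]
    rw [intervalIntegral.integral_of_le hy.le, E1, hsplit]; ring
  have hFTC : HasDerivAt (fun y => ∫ t in a..y, Real.exp (-t) / t) (Real.exp (-x) / x) x := by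
    refine intervalIntegral.integral_hasDerivAt_right ?_ ?_ ?_
    · apply ContinuousOn.intervalIntegrable
      apply ContinuousOn.div (Real.continuous_exp.comp continuous_neg).continuousOn
        continuousOn_id
      intro t ht
      rcases ht with ⟨h1, _⟩
      have : a ≤ t := le_trans (by rw [min_eq_left hax.le]) h1
      exact (lt_of_lt_of_le ha0 this).ne'
    · refine ⟨Set.univ, Filter.univ_mem, Measurable.aestronglyMeasurable ?_⟩
      exact (Real.measurable_exp.comp measurable_neg).div measurable_id
    · exact ContinuousAt.div ((Real.continuous_exp.comp continuous_neg).continuousAt)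
        continuousAt_id hx.ne'
  have heq : E1 =ᶠ[nhds x] fun y => (∫ t in Set.Ioi a, Real.exp (-t) / t)
      - ∫ t in a..y, Real.exp (-t) / t := by
    filter_upwards [Ioi_mem_nhds hax] with y hy using key y hy
  have := (hasDerivAt_const x (∫ t in Set.Ioi a, Real.exp (-t) / t)).sub hFTC
  simpa using this.congr_of_eventuallyEq heq

lemma E1_nonneg {x : ℝ} (hx : 0 < x) : 0 ≤ E1 x := (E1_pos hx).le

lemma E1_le {x : ℝ} (hx : 1 ≤ x) : E1 x ≤ Real.exp (-x) := by
  have hx0 : 0 < x := lt_of_lt_of_le one_pos hx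
  have h1 : E1 x ≤ ∫ t in Set.Ioi x, Real.exp (-t) := by
    rw [E1]
    refine setIntegral_mono_on (E1_integrableOn hx0) ?_ measurableSet_Ioi ?_
    · have := exp_neg_integrableOn_Ioi x (one_pos)
      simpa only [neg_one_mul] using this
    · intro t ht
      have ht1 : 1 ≤ t := hx.trans (le_of_lt ht)
      rw [div_le_iff₀ (by linarith)]
      nlinarith [Real.exp_pos (-t)]
  simpa only [integral_exp_neg_Ioi] using h1

lemma E1_tendsto : Filter.Tendsto E1 Filter.atTop (nhds 0) := by
  apply tendsto_of_tendsto_of_tendsto_of_le_of_le' tendsto_const_nhds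
    (Real.tendsto_exp_neg_atTop_nhds_zero)
  · filter_upwards [Filter.eventually_gt_atTop 0] with x hx using E1_nonneg hx
  · filter_upwards [Filter.eventually_ge_atTop 1] with x hx using E1_le hx

/-- Frank's 2D self-similar solution `T(r,t) = T_∞ (1 - F(r/√t)/F(S))` with
`F(s) = E₁(s²/4)` satisfies the radially symmetric heat equation
`∂T/∂t = (1/r) ∂/∂r (r ∂T/∂r)` in `r > S√t`, vanishes on the moving circle
`r = S√t`, and tends to `T_∞` as `r → ∞`. -/
theorem stmt7 (S Tinf : ℝ) (hS : 0 < S) (hTinf : Tinf < 0) (T : ℝ → ℝ → ℝ)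
    (hT : ∀ r t, T r t = Tinf * (1 - FrankF (r / Real.sqrt t) / FrankF S)) :
    (∀ t : ℝ, 0 < t → ∀ r : ℝ, r > S * Real.sqrt t →
      deriv (fun τ => T r τ) t
        = (1 / r) * deriv (fun ρ => ρ * deriv (fun ρ' => T ρ' t) ρ) r) ∧
    (∀ t : ℝ, 0 < t → T (S * Real.sqrt t) t = 0) ∧
    (∀ t : ℝ, 0 < t →
      Filter.Tendsto (fun r => T r t) Filter.atTop (nhds Tinf)) := by
  have hF0 : 0 < FrankF S := E1_pos (by positivity)
  set c : ℝ := Tinf / FrankF S with hc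
  have hT' : ∀ r t : ℝ, 0 < t → T r t = Tinf - c * E1 (r ^ 2 / (4 * t)) := by
    intro r t ht
    have harg : (r / Real.sqrt t) ^ 2 / 4 = r ^ 2 / (4 * t) := by
      rw [div_pow, Real.sq_sqrt ht.le]
      ring
    rw [hT, FrankF, harg, hc]
    field_simp
  refine ⟨?_, ?_, ?_⟩
  · intro t ht r hr
    have hst : 0 < Real.sqrt t := Real.sqrt_pos.mpr ht
    have hr0 : 0 < r := lt_trans (by positivity) hr
    have hx : 0 < r ^ 2 / (4 * t) := by positivity
    -- inner radial derivative
    have hderiv_r : ∀ ρ : ℝ, 0 < ρ →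
        deriv (fun ρ' => T ρ' t) ρ = 2 * c * Real.exp (-(ρ ^ 2 / (4 * t))) / ρ := by
      intro ρ hρ
      have hxρ : 0 < ρ ^ 2 / (4 * t) := by positivity
      have hg : HasDerivAt (fun ρ' : ℝ => ρ' ^ 2 / (4 * t)) (2 * ρ / (4 * t)) ρ := by
        have := (hasDerivAt_pow 2 ρ).div_const (4 * t)
        simpa using this
      have hE : HasDerivAt (fun ρ' => E1 (ρ' ^ 2 / (4 * t)))
          (-(Real.exp (-(ρ ^ 2 / (4 * t))) / (ρ ^ 2 / (4 * t))) * (2 * ρ / (4 * t))) ρ :=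
        by have := (E1_hasDerivAt hxρ).comp ρ hg; exact this
      have hTfun : (fun ρ' => T ρ' t) = fun ρ' => Tinf - c * E1 (ρ' ^ 2 / (4 * t)) :=
        funext fun ρ' => hT' ρ' t ht
      have hD : HasDerivAt (fun ρ' => T ρ' t)
          (0 - c * (-(Real.exp (-(ρ ^ 2 / (4 * t))) / (ρ ^ 2 / (4 * t))) * (2 * ρ / (4 * t)))) ρ := by
        rw [hTfun]
        exact (hasDerivAt_const _ _).sub (hE.const_mul c)
      rw [hD.deriv]
      field_simp
      ring
    -- RHS
    have hev : (fun ρ => ρ * deriv (fun ρ' => T ρ' t) ρ)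
        =ᶠ[nhds r] fun ρ => 2 * c * Real.exp (-(ρ ^ 2 / (4 * t))) := by
      filter_upwards [Ioi_mem_nhds hr0] with ρ hρ
      have hρ0 : ρ ≠ 0 := (Set.mem_Ioi.mp hρ).ne'
      rw [hderiv_r ρ hρ]
      field_simp
    have hRHS : HasDerivAt (fun ρ => 2 * c * Real.exp (-(ρ ^ 2 / (4 * t))))
        (Real.exp (-(r ^ 2 / (4 * t))) * (-(2 * r / (4 * t))) * (2 * c)) r := by
      have hg : HasDerivAt (fun ρ : ℝ => -(ρ ^ 2 / (4 * t))) (-(2 * r / (4 * t))) r := by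
        have := (hasDerivAt_pow 2 r).div_const (4 * t)
        have h2 := this.neg
        simp at h2
        exact h2
      simpa [mul_comm, mul_assoc, mul_left_comm] using (hg.exp).const_mul (2 * c)
    have hRd : deriv (fun ρ => ρ * deriv (fun ρ' => T ρ' t) ρ) r
        = Real.exp (-(r ^ 2 / (4 * t))) * (-(2 * r / (4 * t))) * (2 * c) := by
      rw [Filter.EventuallyEq.deriv_eq hev, hRHS.deriv]
    -- LHS
    have hgt : HasDerivAt (fun τ : ℝ => r ^ 2 / (4 * τ)) (r ^ 2 / 4 * -(t ^ 2)⁻¹) t := by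
      have heqf : (fun τ : ℝ => r ^ 2 / (4 * τ)) = fun τ => r ^ 2 / 4 * τ⁻¹ := by
        funext τ
        rw [← div_div, div_eq_mul_inv]
      rw [heqf]
      exact (hasDerivAt_inv ht.ne').const_mul _
    have hE : HasDerivAt (fun τ => E1 (r ^ 2 / (4 * τ)))
        (-(Real.exp (-(r ^ 2 / (4 * t))) / (r ^ 2 / (4 * t))) * (r ^ 2 / 4 * -(t ^ 2)⁻¹)) t :=
      by have := (E1_hasDerivAt hx).comp t hgt; exact this
    have hLHS : HasDerivAt (fun τ => T r τ)
        (0 - c * (-(Real.exp (-(r ^ 2 / (4 * t))) / (r ^ 2 / (4 * t))) * (r ^ 2 / 4 * -(t ^ 2)⁻¹))) t := by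
      have hevt : (fun τ => T r τ) =ᶠ[nhds t] fun τ => Tinf - c * E1 (r ^ 2 / (4 * τ)) := by
        filter_upwards [Ioi_mem_nhds ht] with τ hτ using hT' r τ hτ
      exact (((hasDerivAt_const _ _).sub (hE.const_mul c)).congr_of_eventuallyEq hevt)
    rw [hLHS.deriv, hRd]
    field_simp
    ring
  · intro t ht
    have hst : 0 < Real.sqrt t := Real.sqrt_pos.mpr ht
    rw [hT, mul_div_assoc, div_self hst.ne', mul_one, div_self hF0.ne', sub_self, mul_zero]
  · intro t ht
    have heq : (fun r => T r t) = fun r => Tinf - c * E1 (r ^ 2 / (4 * t)) :=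
      funext fun r => hT' r t ht
    rw [heq]
    have h1 : Filter.Tendsto (fun r : ℝ => r ^ 2 / (4 * t)) Filter.atTop Filter.atTop :=
      (tendsto_pow_atTop two_ne_zero).atTop_div_const (by positivity)
    have h2 : Filter.Tendsto (fun r : ℝ => E1 (r ^ 2 / (4 * t))) Filter.atTop (nhds 0) :=
      E1_tendsto.comp h1
    have h3 : Filter.Tendsto (fun r : ℝ => Tinf - c * E1 (r ^ 2 / (4 * t))) Filter.atTop
        (nhds (Tinf - c * 0)) := Filter.Tendsto.sub tendsto_const_nhds (h2.const_mul c)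
    simpa using h3
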